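/- Soundness of the contract for pointer-plus within a block: let x, y, z be program variables with size(x) = size(y) = N, and let Y, Z be logical variables with size(Y) = N and size(Z) = size(z). Then the contract {y = Y * z = Z * 𝔟(Y) ≠ 0 * 𝔟(Y) = 𝔟(Y + Z) * 𝔢(Y) = 𝔢(Y + Z)} x := y ⊕ z {x = Y + Z * y = Y * z = Z * 𝔟(Y) ≠ 0 * 𝔟(Y) = 𝔟(Y + Z) * 𝔢(Y) = 𝔢(Y + Z)} is sound. -/
import Mathlib


namespace Broom

abbrev Byte := Fin 256
abbrev Mem := ℕ → Option Byte

/-- Read a byte sequence (little-endian) as an unsigned number. -/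
def bytesToNum : List Byte → ℕ
  | [] => 0
  | b :: rest => b.val + 256 * bytesToNum rest

/-- The byte sequence of length `n` representing the number `v` (little-endian). -/
def natToBytes : ℕ → ℕ → List Byte
  | 0, _ => []
  | n + 1, v => (⟨v % 256, Nat.mod_lt _ (by norm_num)⟩ : Byte) :: natToBytes n (v / 256)

/-- The base address of the block of `B` containing `ℓ` (0 if there is none). -/
noncomputable def baseFn (B : Finset (ℕ × ℕ)) (ℓ : ℕ) : ℕ :=
  if h : ∃ p ∈ B, p.1 ≤ ℓ ∧ ℓ < p.2 then h.choose.1 else 0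

/-- The end address of the block of `B` containing `ℓ` (0 if there is none). -/
noncomputable def endFn (B : Finset (ℕ × ℕ)) (ℓ : ℕ) : ℕ :=
  if h : ∃ p ∈ B, p.1 ≤ ℓ ∧ ℓ < p.2 then h.choose.2 else 0

/-- Well-formed configuration (stack, blocks, memory). -/
def WfConfig {Var : Type} (N : ℕ) (sz : Var → ℕ) (s : Var → List Byte)
    (B : Finset (ℕ × ℕ)) (M : Mem) : Prop :=
  (∀ v, (s v).length = sz v) ∧
  (∀ p ∈ B, 0 < p.1 ∧ p.1 < p.2 ∧ p.2 ≤ 2 ^ (8 * N)) ∧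
  (∀ p ∈ B, ∀ q ∈ B, p.1 ≠ q.1 ∨ p.2 ≠ q.2 → p.2 ≤ q.1 ∨ q.2 ≤ p.1) ∧
  (∀ ℓ : ℕ, (M ℓ).isSome → ∃ p ∈ B, p.1 ≤ ℓ ∧ ℓ < p.2)

/-- Expressions of the separation logic. -/
inductive Expr (Var : Type) where
  | const : ℕ → ℕ → Expr Var          -- size (in bytes), value
  | var : Var → Expr Var
  | base : Expr Var → Expr Var        -- 𝔟(·)
  | ende : Expr Var → Expr Var        -- 𝔢(·)
  | add : Expr Var → Expr Var → Expr Var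
  | sub : Expr Var → Expr Var → Expr Var
  | substr : Expr Var → ℕ → ℕ → Expr Var   -- ζ[i..j]

namespace Expr

variable {Var : Type}

def size (sz : Var → ℕ) (N : ℕ) : Expr Var → ℕ
  | const n _ => n
  | var v => sz v
  | base _ => N
  | ende _ => N
  | add e₁ _ => e₁.size sz N
  | sub e₁ _ => e₁.size sz N
  | substr _ i j => j - i

noncomputable def eval (B : Finset (ℕ × ℕ)) (s : Var → List Byte) : Expr Var → ℕ
  | const _ v => v
  | var x => bytesToNum (s x)
  | base e => baseFn B (e.eval B s)
  | ende e => endFn B (e.eval B s)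
  | add e₁ e₂ => e₁.eval B s + e₂.eval B s
  | sub e₁ e₂ => e₁.eval B s - e₂.eval B s
  | substr e i j => (e.eval B s / 256 ^ i) % 256 ^ (j - i)

def fv : Expr Var → Set Var
  | const _ _ => ∅
  | var v => {v}
  | base e => e.fv
  | ende e => e.fv
  | add e₁ e₂ => e₁.fv ∪ e₂.fv
  | sub e₁ e₂ => e₁.fv ∪ e₂.fv
  | substr e _ _ => e.fv

/-- The expression does not use the operators 𝔟(·) and 𝔢(·). -/
def noBE : Expr Var → Prop
  | const _ _ => True
  | var _ => True
  | base _ => False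
  | ende _ => False
  | add e₁ e₂ => e₁.noBE ∧ e₂.noBE
  | sub e₁ e₂ => e₁.noBE ∧ e₂.noBE
  | substr e _ _ => e.noBE

def subst (σ : Var → Expr Var) : Expr Var → Expr Var
  | const n v => const n v
  | var v => σ v
  | base e => base (e.subst σ)
  | ende e => ende (e.subst σ)
  | add e₁ e₂ => add (e₁.subst σ) (e₂.subst σ)
  | sub e₁ e₂ => sub (e₁.subst σ) (e₂.subst σ)
  | substr e i j => substr (e.subst σ) i j

end Expr

inductive CmpOp where
  | eq | ne | le | lt | ge | gt

def CmpOp.sem : CmpOp → ℕ → ℕ → Prop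
  | eq, a, b => a = b
  | ne, a, b => a ≠ b
  | le, a, b => a ≤ b
  | lt, a, b => a < b
  | ge, a, b => b ≤ a
  | gt, a, b => b < a

def CmpOp.compl : CmpOp → CmpOp
  | eq => ne
  | ne => eq
  | le => gt
  | lt => ge
  | ge => lt
  | gt => le

/-- Formulae of the separation logic. `ptsBlk ε none κ` is `ε ↦ ⊤[κ]`,
`ptsBlk ε (some b) κ` is `ε ↦ b[κ]`. -/
inductive SLF (Var : Type) where
  | emp : SLF Var
  | tt : SLF Var
  | pts : Expr Var → Expr Var → SLF Var
  | ptsBlk : Expr Var → Option Byte → Expr Var → SLF Var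
  | cmp : CmpOp → Expr Var → Expr Var → SLF Var
  | star : SLF Var → SLF Var → SLF Var
  | disj : SLF Var → SLF Var → SLF Var
  | exis : Var → SLF Var → SLF Var

/-- `M` is the disjoint union of `M₁` and `M₂`. -/
def msplit (M M₁ M₂ : Mem) : Prop :=
  (∀ ℓ, ¬((M₁ ℓ).isSome ∧ (M₂ ℓ).isSome)) ∧
  (∀ ℓ, M ℓ = if (M₁ ℓ).isSome then M₁ ℓ else M₂ ℓ)

/-- The byte sequence `M[a, a+n)`. -/
def readBytes (M : Mem) (a n : ℕ) : List Byte :=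
  (List.range n).map fun i => (M (a + i)).getD 0

/-- Satisfaction of a separation-logic formula by a configuration. -/
def sat {Var : Type} [DecidableEq Var] (N : ℕ) (sz : Var → ℕ) :
    (Var → List Byte) → Finset (ℕ × ℕ) → Mem → SLF Var → Prop
  | _, _, M, .emp => ∀ ℓ, M ℓ = none
  | _, _, _, .tt => True
  | s, B, M, .pts e₁ e₂ =>
      (∀ ℓ, (M ℓ).isSome ↔ (e₁.eval B s ≤ ℓ ∧ ℓ < e₁.eval B s + e₂.size sz N)) ∧
      bytesToNum (readBytes M (e₁.eval B s) (e₂.size sz N)) = e₂.eval B s % 256 ^ e₂.size sz N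
  | s, B, M, .ptsBlk e₁ m e₂ =>
      (∀ ℓ, (M ℓ).isSome ↔ (e₁.eval B s ≤ ℓ ∧ ℓ < e₁.eval B s + e₂.eval B s)) ∧
      (∀ b, m = some b → ∀ ℓ, e₁.eval B s ≤ ℓ → ℓ < e₁.eval B s + e₂.eval B s → M ℓ = some b)
  | s, B, M, .cmp op e₁ e₂ => (∀ ℓ, M ℓ = none) ∧ op.sem (e₁.eval B s) (e₂.eval B s)
  | s, B, M, .star φ₁ φ₂ => ∃ M₁ M₂, msplit M M₁ M₂ ∧ sat N sz s B M₁ φ₁ ∧ sat N sz s B M₂ φ₂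
  | s, B, M, .disj φ₁ φ₂ => sat N sz s B M φ₁ ∨ sat N sz s B M φ₂
  | s, B, M, .exis x φ => ∃ v : List Byte, v.length = sz x ∧ sat N sz (Function.update s x v) B M φ

namespace SLF

variable {Var : Type}

/-- Free variables of a formula. -/
def fv : SLF Var → Set Var
  | emp => ∅
  | tt => ∅
  | pts e₁ e₂ => e₁.fv ∪ e₂.fv
  | ptsBlk e₁ _ e₂ => e₁.fv ∪ e₂.fv
  | cmp _ e₁ e₂ => e₁.fv ∪ e₂.fv
  | star φ₁ φ₂ => φ₁.fv ∪ φ₂.fv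
  | disj φ₁ φ₂ => φ₁.fv ∪ φ₂.fv
  | exis x φ => φ.fv \ {x}

/-- Symbolic heaps are the disjunction-free formulae. -/
def noDisj : SLF Var → Prop
  | emp => True
  | tt => True
  | pts _ _ => True
  | ptsBlk _ _ _ => True
  | cmp _ _ _ => True
  | star φ₁ φ₂ => φ₁.noDisj ∧ φ₂.noDisj
  | disj _ _ => False
  | exis _ φ => φ.noDisj

/-- Quantifier-free formulae. -/
def qf : SLF Var → Prop
  | emp => True
  | tt => True
  | pts _ _ => True
  | ptsBlk _ _ _ => True
  | cmp _ _ _ => True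
  | star φ₁ φ₂ => φ₁.qf ∧ φ₂.qf
  | disj φ₁ φ₂ => φ₁.qf ∧ φ₂.qf
  | exis _ _ => False

/-- The formula does not use the operators 𝔟(·) and 𝔢(·) in its expressions. -/
def noBE : SLF Var → Prop
  | emp => True
  | tt => True
  | pts e₁ e₂ => e₁.noBE ∧ e₂.noBE
  | ptsBlk e₁ _ e₂ => e₁.noBE ∧ e₂.noBE
  | cmp _ e₁ e₂ => e₁.noBE ∧ e₂.noBE
  | star φ₁ φ₂ => φ₁.noBE ∧ φ₂.noBE
  | disj φ₁ φ₂ => φ₁.noBE ∧ φ₂.noBE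
  | exis _ φ => φ.noBE

/-- Pure formulae: separating conjunctions of pure atoms. -/
def isPure : SLF Var → Prop
  | cmp _ _ _ => True
  | star φ₁ φ₂ => φ₁.isPure ∧ φ₂.isPure
  | _ => False

def subst [DecidableEq Var] (σ : Var → Expr Var) : SLF Var → SLF Var
  | emp => emp
  | tt => tt
  | pts e₁ e₂ => pts (e₁.subst σ) (e₂.subst σ)
  | ptsBlk e₁ m e₂ => ptsBlk (e₁.subst σ) m (e₂.subst σ)
  | cmp op e₁ e₂ => cmp op (e₁.subst σ) (e₂.subst σ)
  | star φ₁ φ₂ => star (φ₁.subst σ) (φ₂.subst σ)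
  | disj φ₁ φ₂ => disj (φ₁.subst σ) (φ₂.subst σ)
  | exis x φ => exis x (φ.subst fun v => if v = x then .var v else σ v)

end SLF

/-- Semantic entailment `φ ⊨ ψ`. -/
def Entails {Var : Type} [DecidableEq Var] (N : ℕ) (sz : Var → ℕ) (φ ψ : SLF Var) : Prop :=
  ∀ s B M, WfConfig N sz s B M → sat N sz s B M φ → sat N sz s B M ψ

/-- Existential quantification over a list of variables. -/
def exisList {Var : Type} : List Var → SLF Var → SLF Var
  | [], φ => φ
  | x :: xs, φ => .exis x (exisList xs φ)

/-- Semantic separating conjunction of memory predicates. -/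
def mstar (P Q : Mem → Prop) : Mem → Prop :=
  fun M => ∃ M₁ M₂, msplit M M₁ M₂ ∧ P M₁ ∧ Q M₂

/-- The singly-linked list-segment predicate `sll_Λ(ε₁, ε₂)`,
parameterized by the segment formula `Λ`. -/
inductive Sll {Var : Type} [DecidableEq Var] (N : ℕ) (sz : Var → ℕ)
    (Lam : Expr Var → Expr Var → SLF Var) (s : Var → List Byte) (B : Finset (ℕ × ℕ)) :
    Mem → Expr Var → Expr Var → Prop where
  | nil {M : Mem} {e₁ e₂ : Expr Var} :
      e₁.eval B s = e₂.eval B s → (∀ ℓ, M ℓ = none) → Sll N sz Lam s B M e₁ e₂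
  | cons {M M₁ M₂ : Mem} {e₁ e₂ : Expr Var} (ℓ : ℕ) :
      ℓ < 2 ^ (8 * N) → e₁.eval B s ≠ e₂.eval B s → msplit M M₁ M₂ →
      sat N sz s B M₁ (Lam e₁ (.const N ℓ)) →
      Sll N sz Lam s B M₂ (.const N ℓ) e₂ → Sll N sz Lam s B M e₁ e₂

/-- The segment formula `Λ` is block-closed. -/
def BlockClosed {Var : Type} [DecidableEq Var] (N : ℕ) (sz : Var → ℕ)
    (Lam : Expr Var → Expr Var → SLF Var) : Prop :=
  ∀ (e₁ e₂ : Expr Var) (s : Var → List Byte) (B : Finset (ℕ × ℕ)) (M : Mem),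
    WfConfig N sz s B M → sat N sz s B M (Lam e₁ e₂) →
    ∀ ℓ, (M ℓ).isSome → ∀ ℓ', baseFn B ℓ ≤ ℓ' → ℓ' < endFn B ℓ → (M ℓ').isSome


lemma bytesToNum_natToBytes (n v : ℕ) : bytesToNum (natToBytes n v) = v % 256 ^ n := by
  induction n generalizing v with
  | zero => simp [natToBytes, bytesToNum, Nat.mod_one]
  | succ n ih =>
    have h256 : (256 : ℕ) ^ (n + 1) = 256 * 256 ^ n := by ring
    rw [natToBytes, bytesToNum, ih, h256, Nat.mod_mul]

lemma exists_block_of_baseFn_ne_zero {B : Finset (ℕ × ℕ)} {ℓ : ℕ}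
    (h : baseFn B ℓ ≠ 0) : ∃ p ∈ B, p.1 ≤ ℓ ∧ ℓ < p.2 := by
  by_contra hc
  exact h (by simp [baseFn, dif_neg hc])

lemma block_spec {B : Finset (ℕ × ℕ)} {ℓ : ℕ}
    (h : ∃ p ∈ B, p.1 ≤ ℓ ∧ ℓ < p.2) :
    baseFn B ℓ ≤ ℓ ∧ ℓ < endFn B ℓ ∧ (baseFn B ℓ, endFn B ℓ) ∈ B := by
  obtain ⟨hmem, hle, hlt⟩ := h.choose_spec
  have hb : baseFn B ℓ = h.choose.1 := dif_pos h
  have he : endFn B ℓ = h.choose.2 := dif_pos h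
  refine ⟨hb ▸ hle, he ▸ hlt, ?_⟩
  rw [hb, he]
  simpa using hmem

lemma eval_congr {Var : Type} (B : Finset (ℕ × ℕ)) {s s' : Var → List Byte}
    (e : Expr Var) (h : ∀ v ∈ e.fv, s v = s' v) : e.eval B s = e.eval B s' := by
  induction e with
  | const n v => rfl
  | var v => simp [Expr.eval, h v (by simp [Expr.fv])]
  | base e ih => simp only [Expr.eval, ih h]
  | ende e ih => simp only [Expr.eval, ih h]
  | add e₁ e₂ ih₁ ih₂ =>
    simp only [Expr.eval,
      ih₁ (fun v hv => h v (Set.mem_union_left _ hv)),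
      ih₂ (fun v hv => h v (Set.mem_union_right _ hv))]
  | sub e₁ e₂ ih₁ ih₂ =>
    simp only [Expr.eval,
      ih₁ (fun v hv => h v (Set.mem_union_left _ hv)),
      ih₂ (fun v hv => h v (Set.mem_union_right _ hv))]
  | substr e i j ih => simp only [Expr.eval, ih h]

lemma sat_congr {Var : Type} [DecidableEq Var] (N : ℕ) (sz : Var → ℕ)
    (φ : SLF Var) (B : Finset (ℕ × ℕ)) :
    ∀ (s s' : Var → List Byte) (M : Mem),
      (∀ v ∈ φ.fv, s v = s' v) → sat N sz s B M φ → sat N sz s' B M φ := by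
  induction φ with
  | emp => intro s s' M h hs; exact hs
  | tt => intro s s' M h hs; exact hs
  | pts e₁ e₂ =>
    intro s s' M h hs
    have h₁ := eval_congr B e₁ (fun v hv => h v (Set.mem_union_left _ hv))
    have h₂ := eval_congr B e₂ (fun v hv => h v (Set.mem_union_right _ hv))
    simpa only [sat, h₁, h₂] using hs
  | ptsBlk e₁ m e₂ =>
    intro s s' M h hs
    have h₁ := eval_congr B e₁ (fun v hv => h v (Set.mem_union_left _ hv))
    have h₂ := eval_congr B e₂ (fun v hv => h v (Set.mem_union_right _ hv))
    simpa only [sat, h₁, h₂] using hs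
  | cmp op e₁ e₂ =>
    intro s s' M h hs
    have h₁ := eval_congr B e₁ (fun v hv => h v (Set.mem_union_left _ hv))
    have h₂ := eval_congr B e₂ (fun v hv => h v (Set.mem_union_right _ hv))
    simpa only [sat, h₁, h₂] using hs
  | star φ₁ φ₂ ih₁ ih₂ =>
    rintro s s' M h ⟨M₁, M₂, hsp, h₁, h₂⟩
    exact ⟨M₁, M₂, hsp,
      ih₁ s s' M₁ (fun v hv => h v (Set.mem_union_left _ hv)) h₁,
      ih₂ s s' M₂ (fun v hv => h v (Set.mem_union_right _ hv)) h₂⟩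
  | disj φ₁ φ₂ ih₁ ih₂ =>
    rintro s s' M h (h₁ | h₂)
    · exact Or.inl (ih₁ s s' M (fun v hv => h v (Set.mem_union_left _ hv)) h₁)
    · exact Or.inr (ih₂ s s' M (fun v hv => h v (Set.mem_union_right _ hv)) h₂)
  | exis w φ ih =>
    rintro s s' M h ⟨v, hv, hsat⟩
    refine ⟨v, hv, ih _ _ M ?_ hsat⟩
    intro u hu
    by_cases hux : u = w
    · subst hux; simp
    · rw [Function.update_of_ne hux, Function.update_of_ne hux]
      exact h u ⟨hu, hux⟩

lemma msplit_self_of_empty {M : Mem} (h : ∀ ℓ, M ℓ = none) : msplit M M M := by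
  constructor
  · intro ℓ hc; rw [h ℓ] at hc; simp at hc
  · intro ℓ; simp [h ℓ]

lemma msplit_empty {M M₁ M₂ : Mem} (h : msplit M M₁ M₂)
    (h1 : ∀ ℓ, M₁ ℓ = none) (h2 : ∀ ℓ, M₂ ℓ = none) : ∀ ℓ, M ℓ = none := by
  intro ℓ; rw [h.2 ℓ, h1 ℓ]; simp [h2 ℓ]

/-- Soundness of the contract for pointer-plus within a block:
`{y = Y * z = Z * φ} x := y ⊕ z {x = Y + Z * y = Y * z = Z * φ}` where
`φ ≡ 𝔟(Y) ≠ 0 * 𝔟(Y) = 𝔟(Y + Z) * 𝔢(Y) = 𝔢(Y + Z)`. -/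
theorem ptrplus_contract_sound {Var : Type} [DecidableEq Var]
    (N : ℕ) (hN : 1 ≤ N) (sz : Var → ℕ) (hszpos : ∀ v, 1 ≤ sz v)
    (LVar : Set Var)
    -- program variables x, y, z; logical variables Y, Z
    (x y z Y Z : Var)
    (hx : x ∉ LVar) (hy : y ∉ LVar) (hz : z ∉ LVar) (hY : Y ∈ LVar) (hZ : Z ∈ LVar)
    (hxy : x ≠ y) (hxz : x ≠ z) (hyz : y ≠ z) (hYZ : Y ≠ Z)
    (hszx : sz x = N) (hszy : sz y = N) (hszY : sz Y = N) (hszZ : sz Z = sz z)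
    -- the frame: a symbolic heap over logical variables only
    (F : SLF Var) (hFsh : F.noDisj) (hFlv : F.fv ⊆ LVar)
    -- φ_{Y,Z} ≡ 𝔟(Y) ≠ 0 * 𝔟(Y) = 𝔟(Y + Z) * 𝔢(Y) = 𝔢(Y + Z)
    (φYZ : SLF Var)
    (hφYZ : φYZ =
      ((SLF.cmp .ne (.base (.var Y)) (.const N 0)).star
        (SLF.cmp .eq (.base (.var Y)) (.base (.add (.var Y) (.var Z))))).star
        (SLF.cmp .eq (.ende (.var Y)) (.ende (.add (.var Y) (.var Z)))))
    (s : Var → List Byte) (B : Finset (ℕ × ℕ)) (M : Mem)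
    (hwf : WfConfig N sz s B M)
    -- (s,B,M) ⊨ F * (y = Y * z = Z * φ_{Y,Z})
    (hpre : sat N sz s B M (F.star
      (((SLF.cmp .eq (.var y) (.var Y)).star
        (SLF.cmp .eq (.var z) (.var Z))).star φYZ))) :
    -- the execution does not err ...
    ¬ (bytesToNum (s y) = 0 ∨
        bytesToNum (s y) + bytesToNum (s z) < baseFn B (bytesToNum (s y)) ∨
        bytesToNum (s y) + bytesToNum (s z) > endFn B (bytesToNum (s y))) ∧
    -- ... and the resulting configuration satisfies
    -- F * (x = Y + Z * y = Y * z = Z * φ_{Y,Z})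
    sat N sz (Function.update s x (natToBytes N (bytesToNum (s y) + bytesToNum (s z)))) B M
      (F.star
        ((((SLF.cmp .eq (.var x) (.add (.var Y) (.var Z))).star
            (SLF.cmp .eq (.var y) (.var Y))).star
          (SLF.cmp .eq (.var z) (.var Z))).star φYZ)) := by
  subst hφYZ
  obtain ⟨MF, M2, hsp, hF, hrest⟩ := hpre
  obtain ⟨M21, M22, hsp2, hyz', hφ⟩ := hrest
  obtain ⟨Ma, Mb, hspab, hyY, hzZ⟩ := hyz'
  obtain ⟨Mc, Md, hspcd, hc', hd⟩ := hφ
  obtain ⟨Me, Mf, hspef, he', hf⟩ := hc'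
  -- pure facts
  have hyYs : bytesToNum (s y) = bytesToNum (s Y) := hyY.2
  have hzZs : bytesToNum (s z) = bytesToNum (s Z) := hzZ.2
  have hbne : baseFn B (bytesToNum (s Y)) ≠ 0 := he'.2
  have hbeq : baseFn B (bytesToNum (s Y)) =
      baseFn B (bytesToNum (s Y) + bytesToNum (s Z)) := hf.2
  have heeq : endFn B (bytesToNum (s Y)) =
      endFn B (bytesToNum (s Y) + bytesToNum (s Z)) := hd.2
  set aY := bytesToNum (s Y) with haY
  set bZ := bytesToNum (s Z) with hbZ
  -- block facts
  have hblkY := block_spec (exists_block_of_baseFn_ne_zero hbne)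
  have hbne' : baseFn B (aY + bZ) ≠ 0 := hbeq ▸ hbne
  have hblkYZ := block_spec (exists_block_of_baseFn_ne_zero hbne')
  have hbound : aY + bZ < 2 ^ (8 * N) := by
    have hmem := hblkYZ.2.2
    have := (hwf.2.1 _ hmem).2.2
    exact lt_of_lt_of_le hblkYZ.2.1 this
  have hbound' : aY + bZ < 256 ^ N := by
    have : (256 : ℕ) ^ N = 2 ^ (8 * N) := by
      rw [pow_mul]; norm_num
    omega
  -- no error
  have hYpos : 0 < aY := by
    rcases Nat.eq_zero_or_pos (baseFn B aY) with h0 | h0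
    · exact absurd h0 hbne
    · exact lt_of_lt_of_le h0 hblkY.1
  have hnoerr : ¬ (bytesToNum (s y) = 0 ∨
      bytesToNum (s y) + bytesToNum (s z) < baseFn B (bytesToNum (s y)) ∨
      bytesToNum (s y) + bytesToNum (s z) > endFn B (bytesToNum (s y))) := by
    rw [hyYs, hzZs]
    push_neg
    refine ⟨by omega, ?_, ?_⟩
    · rw [hbeq]; exact hblkYZ.1
    · rw [heeq]; exact le_of_lt hblkYZ.2.1
  refine ⟨hnoerr, ?_⟩
  -- postcondition
  set w : List Byte := natToBytes N (bytesToNum (s y) + bytesToNum (s z)) with hw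
  set s' := Function.update s x w with hs'
  have hsx : ∀ v : Var, v ≠ x → s' v = s v := by
    intro v hv; simp [hs', Function.update_of_ne hv]
  have hxY : Y ≠ x := fun h => hx (h ▸ hY)
  refine ⟨MF, M2, hsp, ?_, ?_⟩
  · -- frame under updated stack
    exact sat_congr N sz F B s s' MF
      (fun v hv => (hsx v (fun h => hx (h ▸ hFlv hv))).symm) hF
  · -- inner symbolic heap: all pure, M2 empty
    have hMa : ∀ ℓ, Ma ℓ = none := hyY.1
    have hMb : ∀ ℓ, Mb ℓ = none := hzZ.1
    have hMe : ∀ ℓ, Me ℓ = none := he'.1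
    have hMf : ∀ ℓ, Mf ℓ = none := hf.1
    have hMd : ∀ ℓ, Md ℓ = none := hd.1
    have hMc : ∀ ℓ, Mc ℓ = none := msplit_empty hspef hMe hMf
    have hM21 : ∀ ℓ, M21 ℓ = none := msplit_empty hspab hMa hMb
    have hM22 : ∀ ℓ, M22 ℓ = none := msplit_empty hspcd hMc hMd
    have hM2 : ∀ ℓ, M2 ℓ = none := msplit_empty hsp2 hM21 hM22
    have hsplit := msplit_self_of_empty hM2
    -- evaluations under s'
    have hs'y : s' y = s y := hsx y (fun h => hxy h.symm)
    have hs'z : s' z = s z := hsx z (fun h => hxz h.symm)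
    have hs'Y : s' Y = s Y := hsx Y hxY
    have hs'Z : s' Z = s Z := hsx Z (fun h => hx (h ▸ hZ))
    have hs'x : s' x = w := by simp [hs']
    have hwval : bytesToNum w = aY + bZ := by
      rw [hw, bytesToNum_natToBytes, hyYs, hzZs]
      exact Nat.mod_eq_of_lt hbound'
    refine ⟨M2, M2, hsplit, ⟨M2, M2, hsplit, ⟨M2, M2, hsplit, ?_, ?_⟩, ?_⟩,
      M2, M2, hsplit, ⟨M2, M2, hsplit, ?_, ?_⟩, ?_⟩
    · -- x = Y + Z
      exact ⟨hM2, by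
        show bytesToNum (s' x) = bytesToNum (s' Y) + bytesToNum (s' Z)
        rw [hs'x, hs'Y, hs'Z, hwval]⟩
    · -- y = Y
      exact ⟨hM2, by
        show bytesToNum (s' y) = bytesToNum (s' Y)
        rw [hs'y, hs'Y]; exact hyYs⟩
    · -- z = Z
      exact ⟨hM2, by
        show bytesToNum (s' z) = bytesToNum (s' Z)
        rw [hs'z, hs'Z]; exact hzZs⟩
    · -- 𝔟(Y) ≠ 0
      exact ⟨hM2, by
        show baseFn B (bytesToNum (s' Y)) ≠ 0
        rw [hs'Y]; exact hbne⟩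
    · -- 𝔟(Y) = 𝔟(Y+Z)
      exact ⟨hM2, by
        show baseFn B (bytesToNum (s' Y)) =
          baseFn B (bytesToNum (s' Y) + bytesToNum (s' Z))
        rw [hs'Y, hs'Z]; exact hbeq⟩
    · -- 𝔢(Y) = 𝔢(Y+Z)
      exact ⟨hM2, by
        show endFn B (bytesToNum (s' Y)) =
          endFn B (bytesToNum (s' Y) + bytesToNum (s' Z))
        rw [hs'Y, hs'Z]; exact heeq⟩

end Broom
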